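/- arXiv:0804.0988 — 4 statements merged into one kernel-verified Lean document; each statement's English description precedes it below -/
import Mathlib

section
/- Let S : [0,∞) × [0,∞) → [0,∞) be a continuous function, written S = S(t,R), such that: (i) there exists R₀ ∈ [0,∞) such that for every R ∈ [0,∞) there exists T_R ∈ [0,∞) with S(t,R) ≤ R₀ for all t ≥ T_R; (ii) S(0,R) = R for all R ∈ [0,∞); (iii) for every t ∈ [0,∞) the map R ↦ S(t,R) is monotone nondecreasing. Then there exists a monotone nondecreasing function Q : [0,∞) → [0,∞) such that S(t,R) ≤ Q(R)·e^{−t} + R₀ for all (t,R) ∈ [0,∞) × [0,∞). -/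
/-- Lemma 4.1: eventual absorption plus monotonicity and continuity yield a uniform
exponential-decay-plus-constant bound. -/
theorem absorption_to_exponential_bound (S : ℝ → ℝ → ℝ) (R₀ : ℝ) (hR₀ : 0 ≤ R₀)
    (hScont : ContinuousOn (fun p : ℝ × ℝ => S p.1 p.2) (Set.Ici 0 ×ˢ Set.Ici 0))
    (hSnonneg : ∀ t ≥ (0:ℝ), ∀ R ≥ (0:ℝ), 0 ≤ S t R)
    (habs : ∀ R ≥ (0:ℝ), ∃ T ≥ (0:ℝ), ∀ t ≥ T, S t R ≤ R₀)
    (hinit : ∀ R ≥ (0:ℝ), S 0 R = R)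
    (hmono : ∀ t ≥ (0:ℝ), MonotoneOn (fun R => S t R) (Set.Ici 0)) :
    ∃ Q : ℝ → ℝ, MonotoneOn Q (Set.Ici 0) ∧ (∀ R ≥ (0:ℝ), 0 ≤ Q R) ∧
      ∀ t ≥ (0:ℝ), ∀ R ≥ (0:ℝ), S t R ≤ Q R * Real.exp (-t) + R₀ := by
  classical
  set f : ℝ → ℝ → ℝ := fun R t => (S t R - R₀) * Real.exp t with hf
  set A : ℝ → Set ℝ := fun R => insert 0 (f R '' Set.Ici 0) with hA
  have hne : ∀ R, (A R).Nonempty := fun R => ⟨0, Set.mem_insert _ _⟩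
  have hbdd : ∀ R ≥ (0:ℝ), BddAbove (A R) := by
    intro R hR
    obtain ⟨T, hT0, hT⟩ := habs R hR
    have hcS : ContinuousOn (fun t => S t R) (Set.Ici 0) := by
      have hc : Continuous (fun t : ℝ => ((t, R) : ℝ × ℝ)) := by continuity
      have := hScont.comp hc.continuousOn (fun t ht => ⟨ht, hR⟩)
      exact this
    have hcont : ContinuousOn (f R) (Set.Icc 0 T) := by
      exact ((hcS.mono Set.Icc_subset_Ici_self).sub continuousOn_const).mul
        Real.continuous_exp.continuousOn
    obtain ⟨M, hM⟩ := (isCompact_Icc.image_of_continuousOn hcont).bddAbove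
    refine ⟨max M 0, ?_⟩
    rintro x (rfl | ⟨t, ht, rfl⟩)
    · exact le_max_right _ _
    by_cases h : t ≤ T
    · exact le_trans (hM ⟨t, ⟨ht, h⟩, rfl⟩) (le_max_left _ _)
    · have h1 : S t R ≤ R₀ := hT t (le_of_lt (not_le.mp h))
      have h2 : f R t ≤ 0 :=
        mul_nonpos_of_nonpos_of_nonneg (by linarith) (Real.exp_pos t).le
      exact h2.trans (le_max_right _ _)
  refine ⟨fun R => sSup (A R), ?_, ?_, ?_⟩
  · intro R hR R' hR' hRR'
    refine csSup_le (hne R) ?_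
    rintro x (rfl | ⟨t, ht, rfl⟩)
    · exact le_csSup (hbdd R' hR') (Set.mem_insert _ _)
    · have hS : S t R ≤ S t R' := hmono t ht hR hR' hRR'
      have : f R t ≤ f R' t := by
        simp only [hf]
        exact mul_le_mul_of_nonneg_right (by linarith) (Real.exp_pos t).le
      exact this.trans (le_csSup (hbdd R' hR') (Set.mem_insert_of_mem _ ⟨t, ht, rfl⟩))
  · intro R hR
    exact le_csSup (hbdd R hR) (Set.mem_insert _ _)
  · intro t ht R hR
    have h1 : f R t ≤ sSup (A R) :=
      le_csSup (hbdd R hR) (Set.mem_insert_of_mem _ ⟨t, ht, rfl⟩)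
    have h2 : (0:ℝ) < Real.exp (-t) := Real.exp_pos _
    have h3 : Real.exp t * Real.exp (-t) = 1 := by
      rw [← Real.exp_add]; simp
    simp only [hf] at h1
    have h4 := mul_le_mul_of_nonneg_right h1 h2.le
    rw [mul_assoc, h3, mul_one] at h4
    show S t R ≤ sSup (A R) * Real.exp (-t) + R₀
    linarith
end

section
/- Let H be a real Hilbert space, let W be a real normed vector space, and let T : H → W be a compact continuous linear operator (i.e. T maps bounded sets of H to relatively compact sets of W). Then for every γ > 0 there exist a finite-dimensional subspace F ⊆ H and a constant K ≥ 0 such that, denoting by P the orthogonal projection of H onto F, one has ‖T w‖²_W ≤ γ‖w‖²_H + K‖P w‖²_H for all w ∈ H. -/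
open Submodule

/-- Key step: for a compact operator `T` on a Hilbert space and any `δ > 0`, there is a
finite-dimensional subspace `F` such that `‖T w‖² ≤ δ ‖w‖²` on `Fᗮ`. -/
theorem aux_compact_small_on_orthogonal
    {H W : Type*} [NormedAddCommGroup H] [InnerProductSpace ℝ H] [CompleteSpace H]
    [NormedAddCommGroup W] [NormedSpace ℝ W]
    (T : H →L[ℝ] W) (hT : IsCompactOperator T) (δ : ℝ) (hδ : 0 < δ) :
    ∃ F : Submodule ℝ H, FiniteDimensional ℝ F ∧
      ∀ w ∈ Fᗮ, ‖T w‖ ^ 2 ≤ δ * ‖w‖ ^ 2 := by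
  by_contra hcon
  push_neg at hcon
  -- choice of a unit vector in `Fᗮ` with `‖T u‖² > δ`
  have key : ∀ F : Submodule ℝ H, ∃ u : H,
      FiniteDimensional ℝ F → u ∈ Fᗮ ∧ ‖u‖ = 1 ∧ δ < ‖T u‖ ^ 2 := by
    intro F
    by_cases h : FiniteDimensional ℝ F
    · obtain ⟨w, hw, hlt⟩ := hcon F h
      have hw0 : w ≠ 0 := by
        rintro rfl
        simp at hlt
      have hnw : (0:ℝ) < ‖w‖ := norm_pos_iff.mpr hw0
      refine ⟨‖w‖⁻¹ • w, fun _ => ⟨Fᗮ.smul_mem _ hw, norm_smul_inv_norm hw0, ?_⟩⟩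
      have hts : ‖T (‖w‖⁻¹ • w)‖ = ‖w‖⁻¹ * ‖T w‖ := by
        rw [map_smul, norm_smul, Real.norm_eq_abs, abs_of_pos (by positivity)]
      rw [hts, mul_pow]
      calc δ = ‖w‖⁻¹ ^ 2 * (δ * ‖w‖ ^ 2) := by field_simp
        _ < ‖w‖⁻¹ ^ 2 * ‖T w‖ ^ 2 :=
            mul_lt_mul_of_pos_left hlt (by positivity)
    · exact ⟨0, fun h' => absurd h' h⟩
  choose g hg using key
  -- recursively build an orthonormal sequence
  set Fs : ℕ → Submodule ℝ H := fun n => Nat.rec ⊥ (fun _ Fn => Fn ⊔ (ℝ ∙ g Fn)) n with hFs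
  have hFsucc : ∀ n, Fs (n + 1) = Fs n ⊔ (ℝ ∙ g (Fs n)) := fun n => rfl
  have fd : ∀ n, FiniteDimensional ℝ (Fs n) := by
    intro n
    induction n with
    | zero => exact inferInstanceAs (FiniteDimensional ℝ (⊥ : Submodule ℝ H))
    | succ n ih => rw [hFsucc]; exact Submodule.finiteDimensional_sup _ _
  set e : ℕ → H := fun n => g (Fs n) with he
  have espec : ∀ n, e n ∈ (Fs n)ᗮ ∧ ‖e n‖ = 1 ∧ δ < ‖T (e n)‖ ^ 2 :=
    fun n => hg (Fs n) (fd n)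
  have hmono : Monotone Fs := monotone_nat_of_le_succ (fun n => by rw [hFsucc]; exact le_sup_left)
  have hmem : ∀ m n, m < n → e m ∈ Fs n := by
    intro m n hmn
    have h1 : e m ∈ Fs (m + 1) := by
      rw [hFsucc]
      exact Submodule.mem_sup_right (Submodule.mem_span_singleton_self _)
    exact hmono hmn h1
  have horth : Orthonormal ℝ e := by
    rw [orthonormal_iff_ite]
    intro i j
    rcases lt_trichotomy i j with hij | hij | hij
    · rw [if_neg hij.ne]
      exact ((espec j).1 (e i) (hmem i j hij)).symm ▸
        ((espec j).1 (e i) (hmem i j hij))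
    · subst hij
      rw [if_pos rfl, real_inner_self_eq_norm_sq, (espec i).2.1]; norm_num
    · rw [if_neg hij.ne']
      rw [real_inner_comm]
      exact (espec i).1 (e j) (hmem j i hij)
  -- compactness: a subsequence of `T (e n)` converges to some `y`
  have hcomp : IsCompact (closure ((T : H →ₗ[ℝ] W) '' Metric.closedBall 0 1)) :=
    IsCompactOperator.isCompact_closure_image_closedBall (𝕜₁ := ℝ) hT 1
  have hmemS : ∀ n, T (e n) ∈ closure ((T : H →ₗ[ℝ] W) '' Metric.closedBall 0 1) := by
    intro n
    exact subset_closure ⟨e n, by simp [(espec n).2.1], by simp⟩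
  obtain ⟨y, hyS, φ, hφ, hconv⟩ := hcomp.tendsto_subseq hmemS
  -- the limit has norm ≥ √δ, in particular is nonzero
  have hylb : δ ≤ ‖y‖ ^ 2 := by
    have : Filter.Tendsto (fun n => ‖T (e (φ n))‖ ^ 2) Filter.atTop (nhds (‖y‖ ^ 2)) :=
      ((continuous_norm.tendsto y).comp hconv).pow 2
    exact ge_of_tendsto this (Filter.Eventually.of_forall fun n => (espec (φ n)).2.2.le)
  have hy0 : y ≠ 0 := by
    rintro rfl
    simp at hylb
    exact absurd (lt_of_lt_of_le hδ hylb) (by norm_num)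
  -- a dual functional detecting `y`
  obtain ⟨f, hf1, hfy⟩ := exists_dual_vector ℝ y (norm_ne_zero_iff.mpr hy0)
  set h : H := (InnerProductSpace.toDual ℝ H).symm (f.comp T) with hh
  have hrepr : ∀ x : H, (inner ℝ h x : ℝ) = f (T x) := fun x =>
    InnerProductSpace.toDual_symm_apply
  -- Bessel: `f (T (e n)) → 0`
  have hsummable : Summable fun n => ‖(inner ℝ (e n) h : ℝ)‖ ^ 2 :=
    horth.inner_products_summable h
  have htend0 : Filter.Tendsto (fun n => f (T (e n))) Filter.atTop (nhds 0) := by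
    have h1 : Filter.Tendsto (fun n => ‖(inner ℝ (e n) h : ℝ)‖ ^ 2) Filter.atTop (nhds 0) :=
      hsummable.tendsto_atTop_zero
    have h2 : Filter.Tendsto (fun n => ‖(inner ℝ (e n) h : ℝ)‖) Filter.atTop (nhds 0) := by
      have := (Real.continuous_sqrt.tendsto 0).comp h1
      simpa [Function.comp_def, Real.sqrt_sq_eq_abs, Real.norm_eq_abs, Real.sqrt_zero] using this
    rw [tendsto_zero_iff_norm_tendsto_zero]
    convert h2 using 2 with n
    rw [← hrepr, real_inner_comm]
  -- but along the subsequence it tends to `f y = ‖y‖ ≠ 0`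
  have htendy : Filter.Tendsto (fun n => f (T (e (φ n)))) Filter.atTop (nhds (f y)) :=
    (f.continuous.tendsto y).comp hconv
  have htendy0 : Filter.Tendsto (fun n => f (T (e (φ n)))) Filter.atTop (nhds 0) :=
    htend0.comp hφ.tendsto_atTop
  have : f y = 0 := tendsto_nhds_unique htendy htendy0
  rw [hfy] at this
  exact hy0 (norm_eq_zero.mp (by exact_mod_cast this))

/-- Lemma 5.3: for a compact operator `T` from a Hilbert space `H` to a normed space `W`
and any `γ > 0`, the norm `‖T w‖²` is controlled by `γ‖w‖²` plus a multiple of the norm of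
a finite-rank orthogonal projection (idempotent and self-adjoint) of `w`. -/
theorem compact_operator_finite_dim_projection_estimate
    {H W : Type*} [NormedAddCommGroup H] [InnerProductSpace ℝ H] [CompleteSpace H]
    [NormedAddCommGroup W] [NormedSpace ℝ W]
    (T : H →L[ℝ] W) (hT : IsCompactOperator T) (γ : ℝ) (hγ : 0 < γ) :
    ∃ P : H →L[ℝ] H,
      FiniteDimensional ℝ (LinearMap.range (P : H →ₗ[ℝ] H)) ∧
      (∀ w : H, P (P w) = P w) ∧
      (∀ u v : H, (inner ℝ (P u) v : ℝ) = (inner ℝ u (P v) : ℝ)) ∧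
      ∃ K ≥ (0:ℝ), ∀ w : H, ‖T w‖ ^ 2 ≤ γ * ‖w‖ ^ 2 + K * ‖P w‖ ^ 2 := by
  obtain ⟨F, hFfd, hFbound⟩ := aux_compact_small_on_orthogonal T hT (γ / 2) (by positivity)
  haveI := hFfd
  refine ⟨F.subtypeL.comp (orthogonalProjection F), ?_, ?_, ?_, 2 * ‖T‖ ^ 2, by positivity, ?_⟩
  · apply Submodule.finiteDimensional_of_le (S₂ := F)
    rintro x ⟨w, rfl⟩
    exact (orthogonalProjection F w).2
  · intro w
    exact Submodule.starProjection_mem_subspace_eq_self (orthogonalProjection F w)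
  · intro u v
    simpa using Submodule.inner_starProjection_left_eq_right F u v
  · intro w
    set p : H := ↑(orthogonalProjection F w) with hp
    set q : H := w - p with hq
    have hqF : q ∈ Fᗮ := Submodule.sub_starProjection_mem_orthogonal w
    have hqb : ‖T q‖ ^ 2 ≤ γ / 2 * ‖q‖ ^ 2 := hFbound q hqF
    have hinner : (inner ℝ p q : ℝ) = 0 :=
      hqF p (orthogonalProjection F w).2
    have hpyth : ‖w‖ ^ 2 = ‖p‖ ^ 2 + ‖q‖ ^ 2 := by
      have : w = p + q := by rw [hq]; abel
      rw [this, norm_add_sq_real, hinner]; ring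
    have htri : ‖T w‖ ≤ ‖T p‖ + ‖T q‖ := by
      have : T w = T p + T q := by rw [hq, map_sub]; abel
      rw [this]; exact norm_add_le _ _
    have hTp : ‖T p‖ ≤ ‖T‖ * ‖p‖ := T.le_opNorm p
    have hTnorm : (0:ℝ) ≤ ‖T‖ := norm_nonneg _
    show ‖T w‖ ^ 2 ≤ γ * ‖w‖ ^ 2 + 2 * ‖T‖ ^ 2 * ‖p‖ ^ 2
    nlinarith [norm_nonneg (T w), norm_nonneg (T p), norm_nonneg (T q), norm_nonneg p,
      norm_nonneg q, sq_nonneg (‖T p‖ - ‖T q‖), sq_nonneg (‖T p‖ + ‖T q‖),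
      mul_nonneg hTnorm (norm_nonneg p)]
end

section
/- Let κ, c₁, c₂ > 0 with c₁ > κ, let T₁ ≥ 0, and let m : [T₁,∞) → [0,∞) be continuous with ∫_{T₁}^{t} m(s) ds ≤ c₂ for all t ≥ T₁. Let y : [T₁,∞) → [0,∞) be differentiable and satisfy y'(t) + κ ≤ c₁·e^{−y(t)} + c₁·m(t)·y(t) for all t ≥ T₁. Then there exists τ ≥ T₁ such that y(t) ≤ log(2c₁/κ)·e^{c₁ c₂} for all t ≥ τ. -/
open Set intervalIntegral MeasureTheory

/-- The ODE lemma behind uniform dissipativity (Theorem 3.1): a nonnegative function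
satisfying `y' + κ ≤ c₁ e^{-y} + c₁ m y` with integrable `m` is eventually bounded by
`log(2c₁/κ)·e^{c₁c₂}`. -/
theorem eventual_bound_of_log_ode (κ c₁ c₂ T₁ : ℝ)
    (hκ : 0 < κ) (hc₁ : 0 < c₁) (hc₂ : 0 < c₂) (hκc₁ : κ < c₁) (hT₁ : 0 ≤ T₁)
    (m : ℝ → ℝ) (hm : ContinuousOn m (Set.Ici T₁)) (hmpos : ∀ t ≥ T₁, 0 ≤ m t)
    (hmint : ∀ t ≥ T₁, (∫ s in T₁..t, m s) ≤ c₂)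
    (y : ℝ → ℝ) (hy : ∀ t ≥ T₁, 0 ≤ y t)
    (hydiff : ∀ t ≥ T₁, DifferentiableAt ℝ y t)
    (hineq : ∀ t ≥ T₁, deriv y t + κ ≤ c₁ * Real.exp (-(y t)) + c₁ * m t * y t) :
    ∃ τ ≥ T₁, ∀ t ≥ τ, y t ≤ Real.log (2 * c₁ / κ) * Real.exp (c₁ * c₂) := by
  set M : ℝ := Real.log (2 * c₁ / κ) with hMdef
  have hMpos : 0 < M := Real.log_pos (by rw [lt_div_iff₀ hκ]; linarith)
  have hexpM : Real.exp (-M) = κ / (2 * c₁) := by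
    rw [Real.exp_neg, Real.exp_log (by positivity), inv_div]
  set I : ℝ → ℝ := fun t => ∫ s in T₁..t, m s with hIdef
  have hyc : ∀ t ≥ T₁, ContinuousAt y t := fun t ht => (hydiff t ht).continuousAt
  have hmInt : ∀ t ≥ T₁, IntervalIntegrable m MeasureTheory.volume T₁ t := by
    intro t ht
    exact (hm.mono (by rw [Set.uIcc_of_le ht]; exact Set.Icc_subset_Ici_self)).intervalIntegrable
  have hInn : ∀ t ≥ T₁, 0 ≤ I t := by
    intro t ht
    exact intervalIntegral.integral_nonneg ht (fun u hu => hmpos u hu.1)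
  have hIderiv : ∀ t ∈ Set.Ioi T₁, HasDerivAt I (m t) t := by
    intro t ht
    exact intervalIntegral.integral_hasDerivAt_right (hmInt t (le_of_lt ht))
      (ContinuousOn.stronglyMeasurableAtFilter isOpen_Ioi
        (hm.mono Set.Ioi_subset_Ici_self) t ht)
      (hm.continuousAt (Ici_mem_nhds ht))
  have hIcont : ContinuousOn I (Set.Ici T₁) := by
    intro t ht
    have hsub : Set.Icc T₁ (t + 1) ⊆ Set.uIcc T₁ (t + 1) := by
      rw [Set.uIcc_of_le (by linarith [Set.mem_Ici.mp ht])]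
    have h1 : ContinuousOn I (Set.uIcc T₁ (t + 1)) :=
      intervalIntegral.continuousOn_primitive_interval'
        (hmInt (t + 1) (by linarith [Set.mem_Ici.mp ht])) Set.left_mem_uIcc
    have h2 : ContinuousWithinAt I (Set.Icc T₁ (t + 1)) t :=
      (h1.mono hsub) t ⟨ht, by linarith⟩
    apply h2.mono_of_mem_nhdsWithin
    have : Set.Icc T₁ (t + 1) = Set.Ici T₁ ∩ Set.Iic (t + 1) := (Set.Ici_inter_Iic).symm
    rw [this]
    exact Filter.inter_mem self_mem_nhdsWithin
      (mem_nhdsWithin_of_mem_nhds (Iic_mem_nhds (by linarith)))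
  set z : ℝ → ℝ := fun t => y t * Real.exp (-(c₁ * I t)) with hzdef
  have hzcont : ContinuousOn z (Set.Ici T₁) := by
    apply ContinuousOn.mul (fun t ht => (hyc t ht).continuousWithinAt)
    exact Real.continuous_exp.comp_continuousOn ((continuousOn_const.mul hIcont).neg)
  have hznn : ∀ t ≥ T₁, 0 ≤ z t := fun t ht => mul_nonneg (hy t ht) (Real.exp_pos _).le
  have hzderiv : ∀ t ∈ Set.Ioi T₁,
      HasDerivAt z ((deriv y t - c₁ * m t * y t) * Real.exp (-(c₁ * I t))) t := by
    intro t ht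
    have h1 : HasDerivAt y (deriv y t) t := (hydiff t (le_of_lt ht)).hasDerivAt
    have h2 : HasDerivAt (fun u => -(c₁ * I u)) (-(c₁ * m t)) t :=
      ((hIderiv t ht).const_mul c₁).neg
    have h3 := h2.exp
    have h4 := h1.mul h3
    exact h4.congr_deriv (by ring)
  set ε : ℝ := (κ / 2) * Real.exp (-(c₁ * c₂)) with hεdef
  have hεpos : 0 < ε := by positivity
  have hkey : ∀ t ∈ Set.Ioi T₁, M ≤ y t →
      (deriv y t - c₁ * m t * y t) * Real.exp (-(c₁ * I t)) ≤ -ε := by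
    intro t ht hMy
    have htT₁ : T₁ ≤ t := le_of_lt ht
    have h1 : Real.exp (-(y t)) ≤ Real.exp (-M) := Real.exp_le_exp.mpr (by linarith)
    have h2 : c₁ * Real.exp (-(y t)) ≤ κ / 2 := by
      rw [hexpM] at h1
      calc c₁ * Real.exp (-(y t)) ≤ c₁ * (κ / (2 * c₁)) :=
            mul_le_mul_of_nonneg_left h1 hc₁.le
        _ = κ / 2 := by field_simp
    have h3 : deriv y t - c₁ * m t * y t ≤ -(κ / 2) := by
      have := hineq t htT₁; linarith
    have hE1 : Real.exp (-(c₁ * c₂)) ≤ Real.exp (-(c₁ * I t)) := by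
      apply Real.exp_le_exp.mpr
      have := hmint t htT₁
      nlinarith
    have hE0 : 0 < Real.exp (-(c₁ * I t)) := Real.exp_pos _
    calc (deriv y t - c₁ * m t * y t) * Real.exp (-(c₁ * I t))
        ≤ -(κ / 2) * Real.exp (-(c₁ * I t)) := mul_le_mul_of_nonneg_right h3 hE0.le
      _ ≤ -(κ / 2) * Real.exp (-(c₁ * c₂)) := by nlinarith
      _ = -ε := by rw [hεdef]; ring
  -- Step 1: y eventually dips below M
  have step1 : ∃ τ₀ ≥ T₁, y τ₀ ≤ M := by
    by_contra hcon
    push_neg at hcon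
    have hanti : AntitoneOn (fun t => z t + ε * t) (Set.Ici T₁) := by
      apply antitoneOn_of_deriv_nonpos (convex_Ici T₁)
      · exact hzcont.add ((continuous_const.mul continuous_id).continuousOn)
      · rw [interior_Ici]
        intro t ht
        exact ((hzderiv t ht).add ((hasDerivAt_id t).const_mul ε)).differentiableAt.differentiableWithinAt
      · rw [interior_Ici]
        intro t ht
        have hd : HasDerivAt (fun u => z u + ε * u)
            ((deriv y t - c₁ * m t * y t) * Real.exp (-(c₁ * I t)) + ε) t := by
          exact ((hzderiv t ht).add ((hasDerivAt_id t).const_mul ε)).congr_deriv (by ring)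
        rw [hd.deriv]
        have := hkey t ht (hcon t (le_of_lt ht)).le
        linarith
    set T : ℝ := T₁ + (z T₁ + 1) / ε with hTdef
    have hzT₁ : 0 ≤ z T₁ := hznn T₁ le_rfl
    have hT : T₁ ≤ T := by
      rw [hTdef]
      have : 0 ≤ (z T₁ + 1) / ε := by positivity
      linarith
    have h5 := hanti (Set.mem_Ici.mpr le_rfl) (Set.mem_Ici.mpr hT) hT
    simp only at h5
    have h6 : ε * T = ε * T₁ + (z T₁ + 1) := by
      rw [hTdef]; field_simp
    have h7 : 0 ≤ z T := hznn T hT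
    linarith
  obtain ⟨τ₀, hτ₀, hyτ₀⟩ := step1
  refine ⟨τ₀, hτ₀, fun t ht => ?_⟩
  by_contra hyt
  push_neg at hyt
  have htT₁ : T₁ ≤ t := le_trans hτ₀ ht
  have hexp1 : 1 ≤ Real.exp (c₁ * c₂) := Real.one_le_exp (by positivity)
  have hMle : M ≤ M * Real.exp (c₁ * c₂) := le_mul_of_one_le_right hMpos.le hexp1
  have hytM : M < y t := lt_of_le_of_lt hMle hyt
  set S : Set ℝ := {r ∈ Set.Icc τ₀ t | y r ≤ M} with hSdef
  have hSne : τ₀ ∈ S := ⟨⟨le_rfl, ht⟩, hyτ₀⟩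
  have hSbdd : BddAbove S := ⟨t, fun r hr => hr.1.2⟩
  set s : ℝ := sSup S with hsdef
  have hs1 : τ₀ ≤ s := le_csSup hSbdd hSne
  have hs2 : s ≤ t := csSup_le ⟨τ₀, hSne⟩ (fun r hr => hr.1.2)
  have hsT₁ : T₁ ≤ s := le_trans hτ₀ hs1
  have hys : y s ≤ M := by
    have hcl : s ∈ closure S := csSup_mem_closure ⟨τ₀, hSne⟩ hSbdd
    haveI : Filter.NeBot (nhdsWithin s S) := mem_closure_iff_nhdsWithin_neBot.mp hcl
    have h1 : Filter.Tendsto y (nhdsWithin s S) (nhds (y s)) :=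
      (hyc s hsT₁).continuousWithinAt
    apply le_of_tendsto h1
    filter_upwards [self_mem_nhdsWithin] with r hr
    exact hr.2
  have hst : s < t := lt_of_le_of_ne hs2 (fun e => by rw [e] at hys; linarith)
  have hMlt : ∀ r ∈ Set.Ioc s t, M < y r := by
    intro r hr
    by_contra hle
    push_neg at hle
    have hrS : r ∈ S := ⟨⟨le_trans hs1 hr.1.le, hr.2⟩, hle⟩
    exact absurd (le_csSup hSbdd hrS) (not_le.mpr hr.1)
  have hanti : AntitoneOn z (Set.Icc s t) := by
    apply antitoneOn_of_deriv_nonpos (convex_Icc s t)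
    · exact hzcont.mono (fun r hr => le_trans hsT₁ hr.1)
    · rw [interior_Icc]
      intro r hr
      have : r ∈ Set.Ioi T₁ := lt_of_le_of_lt hsT₁ hr.1
      exact (hzderiv r this).differentiableAt.differentiableWithinAt
    · rw [interior_Icc]
      intro r hr
      have hrT : r ∈ Set.Ioi T₁ := lt_of_le_of_lt hsT₁ hr.1
      rw [(hzderiv r hrT).deriv]
      have := hkey r hrT (hMlt r ⟨hr.1, hr.2.le⟩).le
      linarith
  have hz : z t ≤ z s :=
    hanti (Set.left_mem_Icc.mpr hst.le) (Set.right_mem_Icc.mpr hst.le) hst.le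
  -- turn z t ≤ z s into y t ≤ M exp(c₁ c₂)
  have ha : y t * Real.exp (-(c₁ * c₂)) ≤ y t * Real.exp (-(c₁ * I t)) := by
    apply mul_le_mul_of_nonneg_left _ (hy t htT₁)
    apply Real.exp_le_exp.mpr
    have := hmint t htT₁
    nlinarith
  have hc : y s * Real.exp (-(c₁ * I s)) ≤ M := by
    have hle1 : Real.exp (-(c₁ * I s)) ≤ 1 := by
      rw [← Real.exp_zero]
      apply Real.exp_le_exp.mpr
      have := hInn s hsT₁
      nlinarith
    calc y s * Real.exp (-(c₁ * I s)) ≤ y s * 1 :=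
          mul_le_mul_of_nonneg_left hle1 (hy s hsT₁)
      _ = y s := mul_one _
      _ ≤ M := hys
  have h5 : y t * Real.exp (-(c₁ * c₂)) ≤ M := le_trans ha (le_trans hz hc)
  have h6 := mul_le_mul_of_nonneg_right h5 (Real.exp_pos (c₁ * c₂)).le
  rw [mul_assoc, ← Real.exp_add] at h6
  simp only [neg_add_cancel, Real.exp_zero, mul_one] at h6
  linarith
end

section
/- Let κ, c₁ > 0 with c₁ ≥ κ, let 0 ≤ T₁ ≤ T, and let m : [T₁,T] → [0,∞) be continuous. Let y : [T₁,T] → [0,∞) be differentiable and satisfy y'(t) + κ ≤ c₁·e^{−y(t)} + c₁·m(t)·y(t) for all t ∈ [T₁,T]. Then for all t ∈ [T₁,T] one has y(t) ≤ max(y(T₁), log(c₁/κ))·exp(c₁·∫_{T₁}^{t} m(s) ds). -/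
/-- The thresholded Gronwall step (disugy*)–(disugy*bis) in the dissipativity proof of
Theorem 3.1. -/
theorem thresholded_gronwall (κ c₁ T₁ T : ℝ)
    (hκ : 0 < κ) (hc₁ : 0 < c₁) (hκc₁ : κ ≤ c₁) (hT₁ : 0 ≤ T₁) (hT : T₁ ≤ T)
    (m : ℝ → ℝ) (hm : ContinuousOn m (Set.Icc T₁ T))
    (hmpos : ∀ t ∈ Set.Icc T₁ T, 0 ≤ m t)
    (y : ℝ → ℝ) (hy : ∀ t ∈ Set.Icc T₁ T, 0 ≤ y t)
    (hydiff : ∀ t ∈ Set.Icc T₁ T, DifferentiableAt ℝ y t)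
    (hineq : ∀ t ∈ Set.Icc T₁ T,
      deriv y t + κ ≤ c₁ * Real.exp (-(y t)) + c₁ * m t * y t) :
    ∀ t ∈ Set.Icc T₁ T,
      y t ≤ max (y T₁) (Real.log (c₁ / κ)) * Real.exp (c₁ * ∫ s in T₁..t, m s) := by
  set ζ := Real.log (c₁ / κ) with hζdef
  set M := max (y T₁) ζ with hMdef
  have hζ0 : 0 ≤ ζ := Real.log_nonneg ((one_le_div hκ).mpr hκc₁)
  have hMζ : ζ ≤ M := le_max_right _ _
  have hM0 : 0 ≤ M := le_trans hζ0 hMζ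
  -- continuous extension of m
  set m' : ℝ → ℝ := fun t => m (min (max t T₁) T) with hm'def
  have hmapsto : ∀ t : ℝ, min (max t T₁) T ∈ Set.Icc T₁ T := by
    intro t
    exact ⟨le_min (le_max_right _ _) hT, min_le_right _ _⟩
  have hclamp : ∀ t ∈ Set.Icc T₁ T, m' t = m t := by
    intro t ht
    simp only [hm'def, max_eq_left ht.1, min_eq_left ht.2]
  have hm'cont : Continuous m' := by
    have : Continuous fun t : ℝ => min (max t T₁) T :=
      (continuous_id.max continuous_const).min continuous_const
    exact hm.comp_continuous this hmapsto
  have hm'pos : ∀ t : ℝ, 0 ≤ m' t := fun t => hmpos _ (hmapsto t)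
  set F : ℝ → ℝ := fun t => ∫ s in T₁..t, m' s with hFdef
  have hFderiv : ∀ t : ℝ, HasDerivAt F (m' t) t := fun t =>
    (hm'cont.integral_hasStrictDerivAt T₁ t).hasDerivAt
  have hFeq : ∀ t ∈ Set.Icc T₁ T, F t = ∫ s in T₁..t, m s := by
    intro t ht
    refine intervalIntegral.integral_congr fun s hs => ?_
    rw [Set.uIcc_of_le ht.1] at hs
    exact hclamp s ⟨hs.1, le_trans hs.2 ht.2⟩
  have hF0 : ∀ t ∈ Set.Icc T₁ T, 0 ≤ F t := by
    intro t ht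
    exact intervalIntegral.integral_nonneg ht.1 fun s _ => hm'pos s
  set z : ℝ → ℝ := fun t => y t * Real.exp (-(c₁ * F t)) with hzdef
  have hEderiv : ∀ t : ℝ,
      HasDerivAt (fun u => Real.exp (-(c₁ * F u)))
        (Real.exp (-(c₁ * F t)) * -(c₁ * m' t)) t := fun t =>
    (((hFderiv t).const_mul c₁).neg).exp
  have hzderiv : ∀ t ∈ Set.Icc T₁ T,
      HasDerivAt z (deriv y t * Real.exp (-(c₁ * F t)) +
        y t * (Real.exp (-(c₁ * F t)) * -(c₁ * m' t))) t := by
    intro t ht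
    exact ((hydiff t ht).hasDerivAt).mul (hEderiv t)
  have hzcont : ContinuousOn z (Set.Icc T₁ T) := fun t ht =>
    ((hzderiv t ht).differentiableAt.continuousAt).continuousWithinAt
  have hyz : ∀ t : ℝ, y t = z t * Real.exp (c₁ * F t) := by
    intro t
    rw [hzdef]
    rw [mul_assoc, ← Real.exp_add]
    simp
  have hzT₁ : z T₁ = y T₁ := by
    simp [hzdef, hFdef, intervalIntegral.integral_same]
  -- main claim: z ≤ M on [T₁, T]
  have hz : ∀ t ∈ Set.Icc T₁ T, z t ≤ M := by
    intro t₂ ht₂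
    by_contra hcon
    push_neg at hcon
    set S : Set ℝ := Set.Icc T₁ t₂ ∩ z ⁻¹' Set.Iic M with hSdef
    have hsub : Set.Icc T₁ t₂ ⊆ Set.Icc T₁ T :=
      Set.Icc_subset_Icc le_rfl ht₂.2
    have hSclosed : IsClosed S :=
      (hzcont.mono hsub).preimage_isClosed_of_isClosed isClosed_Icc isClosed_Iic
    have hST₁ : T₁ ∈ S := by
      refine ⟨⟨le_rfl, ht₂.1⟩, ?_⟩
      simp only [Set.mem_preimage, Set.mem_Iic, hzT₁]
      exact le_max_left _ _
    have hSbdd : BddAbove S := BddAbove.mono (Set.inter_subset_left) bddAbove_Icc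
    set t₀ := sSup S with ht₀def
    have ht₀S : t₀ ∈ S := hSclosed.csSup_mem ⟨T₁, hST₁⟩ hSbdd
    have ht₀Icc : t₀ ∈ Set.Icc T₁ T := hsub ht₀S.1
    have ht₀M : z t₀ ≤ M := ht₀S.2
    have ht₀lt : t₀ < t₂ := lt_of_le_of_ne ht₀S.1.2 (by
      intro h; rw [h] at ht₀M; exact absurd ht₀M (not_le.mpr hcon))
    have hgt : ∀ t ∈ Set.Ioc t₀ t₂, M < z t := by
      intro t ht
      by_contra hle
      push_neg at hle
      have : t ∈ S := ⟨⟨le_trans ht₀S.1.1 ht.1.le, ht.2⟩, hle⟩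
      exact absurd (le_csSup hSbdd this) (not_le.mpr ht.1)
    have hIccsub : Set.Icc t₀ t₂ ⊆ Set.Icc T₁ T :=
      Set.Icc_subset_Icc ht₀S.1.1 ht₂.2
    have hanti : AntitoneOn z (Set.Icc t₀ t₂) := by
      refine antitoneOn_of_deriv_nonpos (convex_Icc _ _) (hzcont.mono hIccsub) ?_ ?_
      · intro t ht
        rw [interior_Icc] at ht
        exact ((hzderiv t (hIccsub (Set.Ioo_subset_Icc_self ht))).differentiableAt).differentiableWithinAt
      · intro t ht
        rw [interior_Icc] at ht
        have htIcc : t ∈ Set.Icc T₁ T := hIccsub (Set.Ioo_subset_Icc_self ht)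
        have hzt : M < z t := hgt t ⟨ht.1, ht.2.le⟩
        have hE1 : (1 : ℝ) ≤ Real.exp (c₁ * F t) :=
          Real.one_le_exp (mul_nonneg hc₁.le (hF0 t htIcc))
        have hyt : ζ ≤ y t := by
          rw [hyz t]
          calc ζ ≤ z t := le_trans hMζ hzt.le
          _ ≤ z t * Real.exp (c₁ * F t) :=
            le_mul_of_one_le_right (le_trans hM0 hzt.le) hE1
        have hexpy : Real.exp (-(y t)) ≤ κ / c₁ := by
          have h1 : Real.exp (-(y t)) ≤ Real.exp (-ζ) :=
            Real.exp_le_exp.mpr (neg_le_neg hyt)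
          have h2 : Real.exp (-ζ) = κ / c₁ := by
            rw [hζdef, Real.exp_neg, Real.exp_log (div_pos hc₁ hκ), inv_div]
          rw [h2] at h1
          exact h1
        have hy' : deriv y t ≤ c₁ * m t * y t := by
          have h1 := hineq t htIcc
          have h2 : c₁ * Real.exp (-(y t)) ≤ κ := by
            calc c₁ * Real.exp (-(y t)) ≤ c₁ * (κ / c₁) :=
              mul_le_mul_of_nonneg_left hexpy hc₁.le
            _ = κ := by field_simp
          linarith
        have hdz := (hzderiv t htIcc).deriv
        rw [hdz, hclamp t htIcc]
        have hEpos : 0 < Real.exp (-(c₁ * F t)) := Real.exp_pos _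
        nlinarith [Real.exp_pos (-(c₁ * F t))]
    have : z t₂ ≤ z t₀ :=
      hanti (Set.left_mem_Icc.mpr ht₀lt.le) (Set.right_mem_Icc.mpr ht₀lt.le) ht₀lt.le
    linarith
  intro t ht
  have := hz t ht
  rw [hyz t, ← hFeq t ht]
  exact mul_le_mul_of_nonneg_right this (Real.exp_nonneg _)
end
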